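/- Let S be a type of sentences containing a distinguished end-of-text sentence $, let c : S → ℝ be a cost function, E : S → S → ℝ a semantic score function, and L : S → S → ℝ a function assigning a log co-occurrence probability to each ordered pair of sentences. Assume (i) for all sentences a, b: L(a,b) − L(a,$) = E(a,b) − (c(a) + c(b)) + (c(a) + c($)) (the Gricean speaker log-probability identity with additive, context-independent sentence costs), and (ii) E(y,y) = 0 for every sentence y. Then for all sentences x, y, the entailment test score L(x,y) − L(x,$) − L(y,y) + L(y,$) equals E(x,y). -/
import Mathlib

/-- Entailment test identity for Gricean speakers:
`S` is a type of sentences with end-of-text sentence `eos`, `c` an additive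
context-independent cost, `E` a semantic score, and `L a b` the log
co-occurrence probability of the ordered pair `(a, b)`.  Under the Gricean
speaker identity, the entailment test score recovers `E x y`. -/
theorem gricean_entailment_test (S : Type*) (eos : S) (c : S → ℝ)
    (E : S → S → ℝ) (L : S → S → ℝ)
    (hGricean : ∀ a b : S,
      L a b - L a eos = E a b - (c a + c b) + (c a + c eos))
    (hSelf : ∀ y : S, E y y = 0) :
    ∀ x y : S, L x y - L x eos - L y y + L y eos = E x y := by
  intro x y
  have h1 := hGricean x y
  have h2 := hGricean y y
  have h3 := hSelf y
  linarith
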